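/- Every generalized extended CMV matrix is gauge-equivalent to a standard extended CMV matrix: for any GECMV matrix ℰ with Verblunsky pairs (α_k, ρ_k)_{k∈ℤ} (|α_k|²+|ρ_k|²=1), there is a diagonal unitary operator D on ℓ²(ℤ) such that D* ℰ D is the extended CMV matrix with Verblunsky pairs (α_k, |ρ_k|)_{k∈ℤ}. -/

import Mathlib

open Complex ComplexConjugate

/-- The `(m,n)` matrix entry of the generalized extended CMV matrix `ℰ = ℒℳ` built from
Verblunsky pairs `(α_k, ρ_k)`, where `Θ(α,ρ) = [[conj α, ρ],[conj ρ, -α]]`. -/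
def GECMVentry (α ρ : ℤ → ℂ) (m n : ℤ) : ℂ :=
  if Even m then
    if n = m - 1 then conj (α m) * conj (ρ (m - 1))
    else if n = m then -(conj (α m) * α (m - 1))
    else if n = m + 1 then ρ m * conj (α (m + 1))
    else if n = m + 2 then ρ m * ρ (m + 1)
    else 0
  else
    if n = m - 2 then conj (ρ (m - 1)) * conj (ρ (m - 2))
    else if n = m - 1 then -(conj (ρ (m - 1)) * α (m - 2))
    else if n = m then -(α (m - 1) * conj (α m))
    else if n = m + 1 then -(α (m - 1) * ρ m)
    else 0

/-!
Conjugating by a diagonal unitary `diag(d_k)` leaves every `α_k` unchanged and replaces `ρ_k`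
by `ρ_k · conj(d_k) · d_{k+1}`, since `ρ_k` only ever links the indices `k` and `k + 1`.
Defining `d` by the recursion `d_{k+1} = d_k · e^{-i arg ρ_k}` therefore turns every `ρ_k`
into `|ρ_k|`.
-/

section IntPartialProd

variable {G : Type*} [CommGroup G]

def intPartialProd (f : ℤ → G) : ℤ → G
  | (n : ℕ) => ∏ k ∈ Finset.range n, f k
  | Int.negSucc n => (∏ k ∈ Finset.range (n + 1), f (Int.negSucc k))⁻¹

theorem intPartialProd_add_one (f : ℤ → G) (k : ℤ) :
    intPartialProd f (k + 1) = intPartialProd f k * f k := by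
  match k with
  | (n : ℕ) => exact Finset.prod_range_succ _ n
  | Int.negSucc 0 => simp [intPartialProd]
  | Int.negSucc (n + 1) =>
    show (∏ k ∈ Finset.range (n + 1), f (Int.negSucc k))⁻¹
      = (∏ k ∈ Finset.range (n + 2), f (Int.negSucc k))⁻¹ * f (Int.negSucc (n + 1))
    rw [Finset.prod_range_succ _ (n + 1), mul_inv_rev, inv_mul_cancel_comm]

end IntPartialProd

theorem mul_circleExp_neg_arg (z : ℂ) : z * Circle.exp (-arg z) = ‖z‖ := by
  nth_rewrite 1 [← norm_mul_exp_arg_mul_I z]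
  rw [Circle.exp_neg, Circle.coe_inv, Circle.coe_exp,
    mul_inv_cancel_right₀ (Complex.exp_ne_zero _)]

theorem GECMVentry_gauge (α ρ d : ℤ → ℂ) (hd : ∀ k, ‖d k‖ = 1) (m n : ℤ) :
    conj (d m) * GECMVentry α ρ m n * d n
      = GECMVentry α (fun k => ρ k * conj (d k) * d (k + 1)) m n := by
  have hd₀ : ∀ k, d k ≠ 0 := fun k => norm_ne_zero_iff.mp (by simp [hd])
  have hconj : ∀ k, conj (d k) = (d k)⁻¹ := fun k => (Complex.inv_eq_conj (hd k)).symm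
  simp only [GECMVentry, map_mul, map_inv₀, hconj]
  split_ifs <;> (try subst n) <;> ring_nf <;> field_simp [hd₀]

theorem stmt4_general (α ρ : ℤ → ℂ) :
    ∃ d : ℤ → ℂ, (∀ n, ‖d n‖ = 1) ∧
      ∀ m n : ℤ, conj (d m) * GECMVentry α ρ m n * d n
        = GECMVentry α (fun k => (‖ρ k‖ : ℂ)) m n := by
  obtain ⟨g, hg⟩ : ∃ g : ℤ → Circle, ∀ k, g (k + 1) = g k * Circle.exp (-arg (ρ k)) :=
    ⟨_, intPartialProd_add_one _⟩
  refine ⟨fun n => g n, fun n => Circle.norm_coe _, fun m n => ?_⟩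
  rw [GECMVentry_gauge α ρ _ (fun n => Circle.norm_coe _)]
  congr 1
  funext k
  rw [← Circle.coe_inv_eq_conj, mul_assoc, ← Circle.coe_mul, hg, inv_mul_cancel_left,
    mul_circleExp_neg_arg]

/-- Every GECMV matrix with Verblunsky pairs `(α_k, ρ_k)` (with `|α_k|² + |ρ_k|² = 1`) is
gauge-equivalent, via a diagonal unitary `D = diag(d_n)`, to the standard extended CMV matrix
with pairs `(α_k, |ρ_k|)`: entrywise `(D*ℰD)(m,n) = conj(d_m) ℰ(m,n) d_n`. -/
theorem stmt4 (α ρ : ℤ → ℂ)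
    (h : ∀ k, ‖α k‖^2 + ‖ρ k‖^2 = 1) :
    ∃ d : ℤ → ℂ, (∀ n, ‖d n‖ = 1) ∧
      ∀ m n : ℤ, conj (d m) * GECMVentry α ρ m n * d n
        = GECMVentry α (fun k => (‖ρ k‖ : ℂ)) m n :=
  stmt4_general α ρ
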